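/- The γ⁺-permutation with variable-capturing substitution for a λ-abstraction context is derivable from β, simple η, and γ-permutation in the λ-calculus with sums: λx.U'{case t of inl y ⇒ s₁ | inr y ⇒ s₂} ≃ case t of inl y ⇒ λx.U'{s₁} | inr y ⇒ λx.U'{s₂}, where {·} denotes variable-capturing hole substitution (x may be captured) and t does not contain x free, follows from the equational theory generated by ⊃β, the permutation γ of elimination contexts across case, the induction hypothesis for U', and ⊃η, closed under symmetry, transitivity and congruence. -/
import Mathlib


/-- Terms of the λ-calculus with binary sums. -/
inductive Tm : Type
  | var : ℕ → Tm
  | lam : ℕ → Tm → Tm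
  | app : Tm → Tm → Tm
  | inl : Tm → Tm
  | inr : Tm → Tm
  | case : Tm → ℕ → Tm → ℕ → Tm → Tm
deriving DecidableEq

namespace Tm

/-- Free variables. -/
def FV : Tm → Set ℕ
  | var x => {x}
  | lam x t => FV t \ {x}
  | app t u => FV t ∪ FV u
  | inl t => FV t
  | inr t => FV t
  | case t y s₁ y' s₂ => FV t ∪ (FV s₁ \ {y}) ∪ (FV s₂ \ {y'})

/-- Substitution of `u` for the free occurrences of `x`. -/
def subst (x : ℕ) (u : Tm) : Tm → Tm
  | var z => if z = x then u else var z
  | lam z t => if z = x then lam z t else lam z (subst x u t)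
  | app t v => app (subst x u t) (subst x u v)
  | inl t => inl (subst x u t)
  | inr t => inr (subst x u t)
  | case t y s₁ y' s₂ =>
      case (subst x u t) y (if y = x then s₁ else subst x u s₁)
        y' (if y' = x then s₂ else subst x u s₂)

end Tm

/-- One-hole contexts. -/
inductive Ctx : Type
  | hole : Ctx
  | lam : ℕ → Ctx → Ctx
  | appL : Ctx → Tm → Ctx
  | appR : Tm → Ctx → Ctx
  | inl : Ctx → Ctx
  | inr : Ctx → Ctx
  | caseS : Ctx → ℕ → Tm → ℕ → Tm → Ctx
  | case1 : Tm → ℕ → Ctx → ℕ → Tm → Ctx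
  | case2 : Tm → ℕ → Tm → ℕ → Ctx → Ctx

namespace Ctx

/-- Filling the hole of a context with a term. -/
def fill : Ctx → Tm → Tm
  | hole, t => t
  | lam x U, t => .lam x (fill U t)
  | appL U u, t => .app (fill U t) u
  | appR u U, t => .app u (fill U t)
  | inl U, t => .inl (fill U t)
  | inr U, t => .inr (fill U t)
  | caseS U y s₁ y' s₂, t => .case (fill U t) y s₁ y' s₂
  | case1 u y U y' s₂, t => .case u y (fill U t) y' s₂
  | case2 u y s₁ y' U, t => .case u y s₁ y' (fill U t)

/-- The variables bound on the path to the hole. -/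
def holeBinders : Ctx → Set ℕ
  | hole => ∅
  | lam x U => insert x (holeBinders U)
  | appL U _ => holeBinders U
  | appR _ U => holeBinders U
  | inl U => holeBinders U
  | inr U => holeBinders U
  | caseS U _ _ _ _ => holeBinders U
  | case1 _ y U _ _ => insert y (holeBinders U)
  | case2 _ _ _ y' U => insert y' (holeBinders U)

/-- The free variables of a context (the hole contributes none). -/
def fvC : Ctx → Set ℕ
  | hole => ∅
  | lam x U => fvC U \ {x}
  | appL U u => fvC U ∪ u.FV
  | appR u U => u.FV ∪ fvC U
  | inl U => fvC U
  | inr U => fvC U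
  | caseS U y s₁ y' s₂ => fvC U ∪ (s₁.FV \ {y}) ∪ (s₂.FV \ {y'})
  | case1 u y U y' s₂ => u.FV ∪ (fvC U \ {y}) ∪ (s₂.FV \ {y'})
  | case2 u y s₁ y' U => u.FV ∪ (s₁.FV \ {y}) ∪ (fvC U \ {y'})

end Ctx

/-- `NoCapture U t`: plugging `t` into `U` is non-variable-capturing. -/
def NoCapture (U : Ctx) (t : Tm) : Prop :=
  ∀ x ∈ Ctx.holeBinders U, x ∉ t.FV

/-- Elimination contexts: the hole is reached only through the function
position of applications and the scrutinee position of case-expressions. -/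
inductive ECtx : Type
  | hole : ECtx
  | appL : ECtx → Tm → ECtx
  | caseS : ECtx → ℕ → Tm → ℕ → Tm → ECtx

namespace ECtx

/-- Filling an elimination context. -/
def fillE : ECtx → Tm → Tm
  | hole, t => t
  | appL E u, t => .app (fillE E t) u
  | caseS E y s₁ y' s₂, t => .case (fillE E t) y s₁ y' s₂

/-- The free variables of an elimination context. -/
def fvE : ECtx → Set ℕ
  | hole => ∅
  | appL E u => fvE E ∪ u.FV
  | caseS E y s₁ y' s₂ => fvE E ∪ (s₁.FV \ {y}) ∪ (s₂.FV \ {y'})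

end ECtx

/-- The equational theory generated by ⊃β, ⊃η and the permutation γ of
elimination contexts across case, closed under reflexivity, symmetry,
transitivity and congruence. -/
inductive Eqv : Tm → Tm → Prop
  | beta (x : ℕ) (t u : Tm) :
      Eqv (.app (.lam x t) u) (Tm.subst x u t)
  | eta (x : ℕ) (t : Tm) (h : x ∉ t.FV) :
      Eqv (.lam x (.app t (.var x))) t
  | gamma (E : ECtx) (t : Tm) (y : ℕ) (s₁ : Tm) (y' : ℕ) (s₂ : Tm)
      (h₁ : y ∉ ECtx.fvE E) (h₂ : y' ∉ ECtx.fvE E) :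
      Eqv (ECtx.fillE E (.case t y s₁ y' s₂))
        (.case t y (ECtx.fillE E s₁) y' (ECtx.fillE E s₂))
  | refl (t : Tm) : Eqv t t
  | symm {t u} : Eqv t u → Eqv u t
  | trans {t u v} : Eqv t u → Eqv u v → Eqv t v
  | congLam (x : ℕ) {t t'} : Eqv t t' → Eqv (.lam x t) (.lam x t')
  | congApp {t t' u u'} : Eqv t t' → Eqv u u' → Eqv (.app t u) (.app t' u')
  | congInl {t t'} : Eqv t t' → Eqv (.inl t) (.inl t')
  | congInr {t t'} : Eqv t t' → Eqv (.inr t) (.inr t')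
  | congCase (y y' : ℕ) {t t' s₁ s₁' s₂ s₂'} :
      Eqv t t' → Eqv s₁ s₁' → Eqv s₂ s₂' →
      Eqv (.case t y s₁ y' s₂) (.case t' y s₁' y' s₂')

theorem subst_var_self (x : ℕ) : ∀ t : Tm, Tm.subst x (.var x) t = t := by
  intro t
  induction t with
  | var z => simp [Tm.subst]; intro h; exact h.symm
  | lam z t ih => simp [Tm.subst, ih]
  | app t u iht ihu => simp [Tm.subst, iht, ihu]
  | inl t ih => simp [Tm.subst, ih]
  | inr t ih => simp [Tm.subst, ih]
  | case t y s₁ y' s₂ iht ih₁ ih₂ =>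
      simp [Tm.subst, iht, ih₁, ih₂]

/-- The variable-capturing γ⁺ step for a λ-abstraction context is derivable
from β, η and γ, given the induction hypothesis for the inner context `U'`
(here `Ctx.fill` is plain, hence variable-capturing, hole substitution). -/
theorem gammaPlus_lam_derivable (U' : Ctx) (x y : ℕ) (t s₁ s₂ : Tm)
    (hx : x ∉ t.FV) (hyx : y ≠ x)
    (IH : Eqv (Ctx.fill U' (.case t y s₁ y s₂))
        (.case t y (Ctx.fill U' s₁) y (Ctx.fill U' s₂))) :
    Eqv (.lam x (Ctx.fill U' (.case t y s₁ y s₂)))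
      (.case t y (.lam x (Ctx.fill U' s₁)) y (.lam x (Ctx.fill U' s₂))) := by
  set a := Ctx.fill U' s₁
  set b := Ctx.fill U' s₂
  -- β expansion: s ≃ (λx.s) x
  have hbeta : ∀ s : Tm, Eqv s (.app (.lam x s) (.var x)) := fun s => by
    have := Eqv.beta x s (.var x)
    rw [subst_var_self] at this
    exact this.symm
  have step1 : Eqv (.lam x (Ctx.fill U' (.case t y s₁ y s₂)))
      (.lam x (.case t y (.app (.lam x a) (.var x)) y (.app (.lam x b) (.var x)))) :=
    Eqv.congLam x (IH.trans (Eqv.congCase y y (Eqv.refl t) (hbeta a) (hbeta b)))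
  have hg : Eqv (.app (.case t y (.lam x a) y (.lam x b)) (.var x))
      (.case t y (.app (.lam x a) (.var x)) y (.app (.lam x b) (.var x))) := by
    have := Eqv.gamma (ECtx.appL .hole (.var x)) t y (.lam x a) y (.lam x b)
      (by simp [ECtx.fvE, Tm.FV, hyx]) (by simp [ECtx.fvE, Tm.FV, hyx])
    simpa [ECtx.fillE] using this
  have heta : Eqv (.lam x (.app (.case t y (.lam x a) y (.lam x b)) (.var x)))
      (.case t y (.lam x a) y (.lam x b)) := by
    apply Eqv.eta
    simp only [Tm.FV]
    rintro (h | h) <;> simp_all [Tm.FV]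
  exact step1.trans ((Eqv.congLam x hg.symm).trans heta)
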